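/- arXiv:1411.4301 — 5 statements merged into one kernel-verified Lean document; each statement's English description precedes it below -/
import Mathlib

section
/- Let (W, φ) be a projective isometric operator-valued system of imprimitivity of (S, Σ) on a complex Banach space X with multiplier ω, and let (V, ρ, Q, T) be a dilation system of (W, φ) on a complex Banach space Z. Then the closed subspace Y = closure(Q(Z)) of X is invariant under (W, φ), i.e. W_s Y ⊆ Y and φ(E) Y ⊆ Y for all s ∈ S and E ∈ Σ, and the pair of restrictions (W_s|_Y, φ(E)|_Y) is a projective isometric operator-valued system of imprimitivity of (S, Σ) on Y with the same multiplier ω. -/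
/-!
`W_s Q = Q V_s` and `φ(E) Q = Q (ρ(E) T Q)`, so `W_s` and `φ(E)` are semiconjugated by `Q` to
operators on `Z`; hence they map `Q(Z)` into itself, and by continuity also its closure `Y`.
Every other property of the restricted system is a pointwise identity on `X`, which holds in
particular on `Y`.
-/

open Set Function

theorem Function.Semiconj.mapsTo_closure_range {α β : Type*} [TopologicalSpace β]
    {f : α → β} {fa : α → α} {fb : β → β} (h : Semiconj f fa fb) (hfb : Continuous fb) :
    MapsTo fb (closure (range f)) (closure (range f)) :=
  h.mapsTo_range.closure hfb

theorem ContinuousLinearMap.semiconj_of_comp_eq {R X Z : Type*} [Semiring R]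
    [TopologicalSpace X] [AddCommMonoid X] [Module R X]
    [TopologicalSpace Z] [AddCommMonoid Z] [Module R Z]
    {Q : Z →L[R] X} {U : Z →L[R] Z} {A : X →L[R] X} (h : Q.comp U = A.comp Q) :
    Semiconj Q U A :=
  fun z => DFunLike.congr_fun h z

theorem restriction_to_closure_of_range_of_dilation_general
    {Ω : Type*} [MeasurableSpace Ω]
    {S : Type*} [Monoid S]
    -- a Σ-measurable S-space
    (act : S → Set Ω → Set Ω)
    {X : Type*} [NormedAddCommGroup X] [NormedSpace ℂ X]
    {Z : Type*} [NormedAddCommGroup Z] [NormedSpace ℂ Z]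
    -- a multiplier ω on S
    (ω : S → S → ℂ)
    -- a projective isometric operator-valued system of imprimitivity (W, φ) on X
    (W : S → X →L[ℂ] X)
    (hW_iso : ∀ s (x : X), ‖W s x‖ = ‖x‖)
    (hW_one : W 1 = ContinuousLinearMap.id ℂ X)
    (hW_mul : ∀ s t, (W s).comp (W t) = ω s t • W (s * t))
    (φ : Set Ω → X →L[ℂ] X)
    (hφ_add : ∀ B : ℕ → Set Ω, (∀ i, MeasurableSet (B i)) → Pairwise (Function.onFun Disjoint B) →
      ∀ x : X, HasSum (fun i => φ (B i) x) (φ (⋃ i, B i) x))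
    (hcov : ∀ s (E : Set Ω), MeasurableSet E → (W s).comp (φ E) = (φ (act s E)).comp (W s))
    -- a dilation system (V, ρ, Q, T) of (W, φ) on Z
    (V : S → Z →L[ℂ] Z)
    (ρ : Set Ω → Z →L[ℂ] Z)
    (Q : Z →L[ℂ] X) (T : X →L[ℂ] Z)
    (hdil : ∀ E : Set Ω, MeasurableSet E → φ E = (Q.comp (ρ E)).comp T)
    (hQV : ∀ s, Q.comp (V s) = (W s).comp Q) :
    -- Y = closure (Q(Z))
    ∀ Y : Set X, Y = closure (Set.range Q) →
      -- Y is invariant under W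
      (∀ s, ∀ y ∈ Y, W s y ∈ Y) ∧
      -- Y is invariant under φ
      (∀ E : Set Ω, MeasurableSet E → ∀ y ∈ Y, φ E y ∈ Y) ∧
      -- the restriction of W is a projective isometric representation with multiplier ω
      (∀ s, ∀ y ∈ Y, ‖W s y‖ = ‖y‖) ∧
      (∀ y ∈ Y, W 1 y = y) ∧
      (∀ s t, ∀ y ∈ Y, W s (W t y) = ω s t • W (s * t) y) ∧
      -- the restriction of φ is still countably additive (a B(Y)-valued measure)
      (∀ B : ℕ → Set Ω, (∀ i, MeasurableSet (B i)) → Pairwise (Function.onFun Disjoint B) →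
        ∀ y ∈ Y, HasSum (fun i => φ (B i) y) (φ (⋃ i, B i) y)) ∧
      -- the restricted covariance relation
      (∀ s (E : Set Ω), MeasurableSet E → ∀ y ∈ Y, W s (φ E y) = φ (act s E) (W s y)) := by
  rintro Y rfl
  have hφQ : ∀ E, MeasurableSet E → Q.comp ((ρ E).comp (T.comp Q)) = (φ E).comp Q := by
    intro E hE
    rw [hdil E hE]
    rfl
  refine ⟨fun s => ?_, fun E hE => ?_, fun s y _ => hW_iso s y, fun y _ => by simp [hW_one],
    fun s t y _ => by simpa using DFunLike.congr_fun (hW_mul s t) y,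
    fun B hB hdisj y _ => hφ_add B hB hdisj y,
    fun s E hE y _ => DFunLike.congr_fun (hcov s E hE) y⟩
  · exact (ContinuousLinearMap.semiconj_of_comp_eq (hQV s)).mapsTo_closure_range (W s).continuous
  · exact (ContinuousLinearMap.semiconj_of_comp_eq (hφQ E hE)).mapsTo_closure_range
      (φ E).continuous

/-- If `(V, ρ, Q, T)` is a dilation system of a projective isometric
operator-valued system of imprimitivity `(W, φ)` on `X`, then the closed subspace
`Y = closure (Q(Z))` of `X` is invariant under `(W, φ)`, and the restrictions form a
projective isometric operator-valued system of imprimitivity on `Y` with the same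
multiplier. -/
theorem restriction_to_closure_of_range_of_dilation
    {Ω : Type*} [MeasurableSpace Ω]
    {S : Type*} [Monoid S]
    -- a Σ-measurable S-space
    (act : S → Set Ω → Set Ω)
    (hact_meas : ∀ s (E : Set Ω), MeasurableSet E → MeasurableSet (act s E))
    (hact_mul : ∀ s t (E : Set Ω), MeasurableSet E → act s (act t E) = act (s * t) E)
    (hact_one : ∀ E : Set Ω, MeasurableSet E → act 1 E = E)
    (hact_empty : ∀ s, act s (∅ : Set Ω) = ∅)
    (hact_univ : ∀ s, act s (Set.univ : Set Ω) = Set.univ)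
    (hact_iUnion : ∀ s (E : ℕ → Set Ω), (∀ n, MeasurableSet (E n)) →
      act s (⋃ n, E n) = ⋃ n, act s (E n))
    (hact_iInter : ∀ s (E : ℕ → Set Ω), (∀ n, MeasurableSet (E n)) →
      act s (⋂ n, E n) = ⋂ n, act s (E n))
    {X : Type*} [NormedAddCommGroup X] [NormedSpace ℂ X] [CompleteSpace X]
    {Z : Type*} [NormedAddCommGroup Z] [NormedSpace ℂ Z] [CompleteSpace Z]
    -- a multiplier ω on S
    (ω : S → S → ℂ)
    (hω_norm : ∀ s t, ‖ω s t‖ = 1)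
    (hω_one : ∀ s, ω 1 s = 1 ∧ ω s 1 = 1)
    (hω_cocycle : ∀ s t u, ω s t * ω (s * t) u = ω s (t * u) * ω t u)
    -- a projective isometric operator-valued system of imprimitivity (W, φ) on X
    (W : S → X →L[ℂ] X)
    (hW_iso : ∀ s (x : X), ‖W s x‖ = ‖x‖)
    (hW_one : W 1 = ContinuousLinearMap.id ℂ X)
    (hW_mul : ∀ s t, (W s).comp (W t) = ω s t • W (s * t))
    (φ : Set Ω → X →L[ℂ] X)
    (hφ_add : ∀ B : ℕ → Set Ω, (∀ i, MeasurableSet (B i)) → Pairwise (Function.onFun Disjoint B) →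
      ∀ x : X, HasSum (fun i => φ (B i) x) (φ (⋃ i, B i) x))
    (hcov : ∀ s (E : Set Ω), MeasurableSet E → (W s).comp (φ E) = (φ (act s E)).comp (W s))
    -- a dilation system (V, ρ, Q, T) of (W, φ) on Z
    (V : S → Z →L[ℂ] Z)
    (hV_iso : ∀ s (z : Z), ‖V s z‖ = ‖z‖)
    (hV_one : V 1 = ContinuousLinearMap.id ℂ Z)
    (hV_mul : ∀ s t, (V s).comp (V t) = ω s t • V (s * t))
    (ρ : Set Ω → Z →L[ℂ] Z)
    (hρ_add : ∀ B : ℕ → Set Ω, (∀ i, MeasurableSet (B i)) → Pairwise (Function.onFun Disjoint B) →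
      ∀ z : Z, HasSum (fun i => ρ (B i) z) (ρ (⋃ i, B i) z))
    (hρ_spectral : ∀ A B : Set Ω, MeasurableSet A → MeasurableSet B →
      ρ (A ∩ B) = (ρ A).comp (ρ B))
    (hVρ_cov : ∀ s (E : Set Ω), MeasurableSet E → (V s).comp (ρ E) = (ρ (act s E)).comp (V s))
    (Q : Z →L[ℂ] X) (T : X →L[ℂ] Z)
    (hdil : ∀ E : Set Ω, MeasurableSet E → φ E = (Q.comp (ρ E)).comp T)
    (hQV : ∀ s, Q.comp (V s) = (W s).comp Q)
    (hVT : ∀ s, (V s).comp T = T.comp (W s)) :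
    -- Y = closure (Q(Z))
    ∀ Y : Set X, Y = closure (Set.range Q) →
      -- Y is invariant under W
      (∀ s, ∀ y ∈ Y, W s y ∈ Y) ∧
      -- Y is invariant under φ
      (∀ E : Set Ω, MeasurableSet E → ∀ y ∈ Y, φ E y ∈ Y) ∧
      -- the restriction of W is a projective isometric representation with multiplier ω
      (∀ s, ∀ y ∈ Y, ‖W s y‖ = ‖y‖) ∧
      (∀ y ∈ Y, W 1 y = y) ∧
      (∀ s t, ∀ y ∈ Y, W s (W t y) = ω s t • W (s * t) y) ∧
      -- the restriction of φ is still countably additive (a B(Y)-valued measure)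
      (∀ B : ℕ → Set Ω, (∀ i, MeasurableSet (B i)) → Pairwise (Function.onFun Disjoint B) →
        ∀ y ∈ Y, HasSum (fun i => φ (B i) y) (φ (⋃ i, B i) y)) ∧
      -- the restricted covariance relation
      (∀ s (E : Set Ω), MeasurableSet E → ∀ y ∈ Y, W s (φ E y) = φ (act s E) (W s y)) :=
  restriction_to_closure_of_range_of_dilation_general act ω W hW_iso hW_one hW_mul φ hφ_add hcov V ρ
    Q T hdil hQV
end

section
/- Let (W, φ) be a projective isometric operator-valued system of imprimitivity of (S, Σ) on a complex Banach space X with multiplier ω, and let (V, ρ, Q, T) be a dilation system of (W, φ) on a complex Banach space Z. Then for every s ∈ S, every n ∈ ℕ, all scalars c_1, …, c_n ∈ ℂ, vectors x_1, …, x_n ∈ X and sets E_1, …, E_n ∈ Σ, one has ‖Σ_{i=1}^n c_i ρ(sE_i) T (W_s x_i)‖_Z = ‖Σ_{i=1}^n c_i ρ(E_i) T x_i‖_Z. (Consequently, for an injective dilation system the formula ‖Σ_i c_i φ_{x_i,E_i}‖_d = ‖Σ_i c_i ρ(E_i) T x_i‖_Z defines a norm on span{φ_{x,E}} which is a dilation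 norm of (W, φ).) -/
section Intertwining

variable {𝕜 X Z : Type*} [NontriviallyNormedField 𝕜]
  [NormedAddCommGroup X] [NormedSpace 𝕜 X] [NormedAddCommGroup Z] [NormedSpace 𝕜 Z]

theorem apply_apply_apply_eq_of_intertwining {V P P' : Z →L[𝕜] Z} {W : X →L[𝕜] X}
    {T : X →L[𝕜] Z} (hVP : V.comp P = P'.comp V) (hVT : V.comp T = T.comp W) (x : X) :
    P' (T (W x)) = V (P (T x)) := by
  rw [← ContinuousLinearMap.comp_apply T W, ← hVT, ContinuousLinearMap.comp_apply,
    ← ContinuousLinearMap.comp_apply P', ← hVP, ContinuousLinearMap.comp_apply]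

theorem norm_sum_smul_apply_of_isometry {ι : Type*} {V : Z →L[𝕜] Z} (hV : ∀ z, ‖V z‖ = ‖z‖)
    (s : Finset ι) (c : ι → 𝕜) (z : ι → Z) :
    ‖∑ i ∈ s, c i • V (z i)‖ = ‖∑ i ∈ s, c i • z i‖ := by
  simp only [← map_smul, ← map_sum, hV]

end Intertwining

theorem norm_invariance_for_injective_dilation_norm_general
    {Ω : Type*} [MeasurableSpace Ω]
    {S : Type*}
    -- a Σ-measurable S-space
    (act : S → Set Ω → Set Ω)
    {X : Type*} [NormedAddCommGroup X] [NormedSpace ℂ X]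
    {Z : Type*} [NormedAddCommGroup Z] [NormedSpace ℂ Z]
    -- a projective isometric operator-valued system of imprimitivity (W, φ) on X
    (W : S → X →L[ℂ] X)
    -- a dilation system (V, ρ, Q, T) of (W, φ) on Z
    (V : S → Z →L[ℂ] Z)
    (hV_iso : ∀ s (z : Z), ‖V s z‖ = ‖z‖)
    (ρ : Set Ω → Z →L[ℂ] Z)
    (hVρ_cov : ∀ s (E : Set Ω), MeasurableSet E → (V s).comp (ρ E) = (ρ (act s E)).comp (V s))
    (T : X →L[ℂ] Z)
    (hVT : ∀ s, (V s).comp T = T.comp (W s)) :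
    ∀ (s : S) (n : ℕ) (c : Fin n → ℂ) (x : Fin n → X) (E : Fin n → Set Ω),
      (∀ i, MeasurableSet (E i)) →
      ‖∑ i, c i • ρ (act s (E i)) (T (W s (x i)))‖ = ‖∑ i, c i • ρ (E i) (T (x i))‖ := by
  intro s n c x E hE
  have hterm : ∀ i, ρ (act s (E i)) (T (W s (x i))) = V s (ρ (E i) (T (x i))) := fun i =>
    apply_apply_apply_eq_of_intertwining (hVρ_cov s (E i) (hE i)) (hVT s) (x i)
  simp only [hterm]
  exact norm_sum_smul_apply_of_isometry (hV_iso s) _ c _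

/-- For a dilation system `(V, ρ, Q, T)` of a projective isometric
operator-valued system of imprimitivity `(W, φ)`, the quantity
`‖Σ_i c_i ρ(sE_i) T (W_s x_i)‖` equals `‖Σ_i c_i ρ(E_i) T x_i‖` for every `s ∈ S`. -/
theorem norm_invariance_for_injective_dilation_norm
    {Ω : Type*} [MeasurableSpace Ω]
    {S : Type*} [Monoid S]
    -- a Σ-measurable S-space
    (act : S → Set Ω → Set Ω)
    (hact_meas : ∀ s (E : Set Ω), MeasurableSet E → MeasurableSet (act s E))
    (hact_mul : ∀ s t (E : Set Ω), MeasurableSet E → act s (act t E) = act (s * t) E)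
    (hact_one : ∀ E : Set Ω, MeasurableSet E → act 1 E = E)
    (hact_empty : ∀ s, act s (∅ : Set Ω) = ∅)
    (hact_univ : ∀ s, act s (Set.univ : Set Ω) = Set.univ)
    (hact_iUnion : ∀ s (E : ℕ → Set Ω), (∀ n, MeasurableSet (E n)) →
      act s (⋃ n, E n) = ⋃ n, act s (E n))
    (hact_iInter : ∀ s (E : ℕ → Set Ω), (∀ n, MeasurableSet (E n)) →
      act s (⋂ n, E n) = ⋂ n, act s (E n))
    {X : Type*} [NormedAddCommGroup X] [NormedSpace ℂ X] [CompleteSpace X]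
    {Z : Type*} [NormedAddCommGroup Z] [NormedSpace ℂ Z] [CompleteSpace Z]
    -- a multiplier ω on S
    (ω : S → S → ℂ)
    (hω_norm : ∀ s t, ‖ω s t‖ = 1)
    (hω_one : ∀ s, ω 1 s = 1 ∧ ω s 1 = 1)
    (hω_cocycle : ∀ s t u, ω s t * ω (s * t) u = ω s (t * u) * ω t u)
    -- a projective isometric operator-valued system of imprimitivity (W, φ) on X
    (W : S → X →L[ℂ] X)
    (hW_iso : ∀ s (x : X), ‖W s x‖ = ‖x‖)
    (hW_one : W 1 = ContinuousLinearMap.id ℂ X)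
    (hW_mul : ∀ s t, (W s).comp (W t) = ω s t • W (s * t))
    (φ : Set Ω → X →L[ℂ] X)
    (hφ_add : ∀ B : ℕ → Set Ω, (∀ i, MeasurableSet (B i)) → Pairwise (Function.onFun Disjoint B) →
      ∀ x : X, HasSum (fun i => φ (B i) x) (φ (⋃ i, B i) x))
    (hcov : ∀ s (E : Set Ω), MeasurableSet E → (W s).comp (φ E) = (φ (act s E)).comp (W s))
    -- a dilation system (V, ρ, Q, T) of (W, φ) on Z
    (V : S → Z →L[ℂ] Z)
    (hV_iso : ∀ s (z : Z), ‖V s z‖ = ‖z‖)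
    (hV_one : V 1 = ContinuousLinearMap.id ℂ Z)
    (hV_mul : ∀ s t, (V s).comp (V t) = ω s t • V (s * t))
    (ρ : Set Ω → Z →L[ℂ] Z)
    (hρ_add : ∀ B : ℕ → Set Ω, (∀ i, MeasurableSet (B i)) → Pairwise (Function.onFun Disjoint B) →
      ∀ z : Z, HasSum (fun i => ρ (B i) z) (ρ (⋃ i, B i) z))
    (hρ_spectral : ∀ A B : Set Ω, MeasurableSet A → MeasurableSet B →
      ρ (A ∩ B) = (ρ A).comp (ρ B))
    (hVρ_cov : ∀ s (E : Set Ω), MeasurableSet E → (V s).comp (ρ E) = (ρ (act s E)).comp (V s))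
    (Q : Z →L[ℂ] X) (T : X →L[ℂ] Z)
    (hdil : ∀ E : Set Ω, MeasurableSet E → φ E = (Q.comp (ρ E)).comp T)
    (hQV : ∀ s, Q.comp (V s) = (W s).comp Q)
    (hVT : ∀ s, (V s).comp T = T.comp (W s)) :
    ∀ (s : S) (n : ℕ) (c : Fin n → ℂ) (x : Fin n → X) (E : Fin n → Set Ω),
      (∀ i, MeasurableSet (E i)) →
      ‖∑ i, c i • ρ (act s (E i)) (T (W s (x i)))‖ = ‖∑ i, c i • ρ (E i) (T (x i))‖ :=
  norm_invariance_for_injective_dilation_norm_general act W V hV_iso ρ hVρ_cov T hVT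
end

section
/- Let H be a complex Hilbert space and ϖ a positive operator-valued measure on (Ω, Σ) acting on H. Then for every n ∈ ℕ, all scalars α_1, …, α_n ∈ ℂ, vectors x_1, …, x_n ∈ H and sets E_1, …, E_n ∈ Σ, the number Σ_{i=1}^n Σ_{j=1}^n α_i conj(α_j) ⟨ϖ(E_i ∩ E_j) x_i, x_j⟩ is real and nonnegative. In particular, if the sets E_1, …, E_n are pairwise disjoint, this number equals Σ_{i=1}^n |α_i|² ⟨ϖ(E_i) x_i, x_i⟩. -/
/-! The sets `E i` cut `Ω` into the atoms `A S = {ω | ω ∈ E i ↔ i ∈ S}`, and `E i ∩ E j` is the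
disjoint union of the atoms with `i, j ∈ S`. Finite additivity of `ϖ` therefore turns the double
sum into `∑ S, ⟪ϖ (A S) y_S, y_S⟫` with `y_S = ∑ i ∈ S, conj (α i) • x i`, a sum of nonnegative
numbers. When the `E i` are pairwise disjoint only the diagonal survives, because `ϖ ∅ = 0`. -/
open MeasureTheory Finset
open scoped InnerProductSpace ComplexOrder

section CountablyAdditive

variable {Ω M : Type*} [MeasurableSpace Ω]

def IsCountablyAdditive [AddCommMonoid M] [TopologicalSpace M] (m : Set Ω → M) : Prop :=
  ∀ B : ℕ → Set Ω, (∀ i, MeasurableSet (B i)) → Pairwise (Function.onFun Disjoint B) →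
    HasSum (fun i => m (B i)) (m (⋃ i, B i))

variable [AddCommGroup M] [TopologicalSpace M] [IsTopologicalAddGroup M] [T2Space M]
  {m : Set Ω → M}

theorem IsCountablyAdditive.apply_empty (hm : IsCountablyAdditive m) : m ∅ = 0 := by
  have h := hm (fun _ => ∅) (fun _ => .empty) fun _ _ _ => Set.disjoint_empty _
  exact (summable_const_iff _).1 h.summable

open Classical in
noncomputable def IsCountablyAdditive.toVectorMeasure (hm : IsCountablyAdditive m) :
    VectorMeasure Ω M where
  measureOf' s := if MeasurableSet s then m s else 0
  empty' := by simp [hm.apply_empty]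
  not_measurable' s hs := if_neg hs
  m_iUnion' B hB hd := by
    simpa only [hB, MeasurableSet.iUnion hB, if_true] using hm B hB hd

theorem IsCountablyAdditive.toVectorMeasure_apply (hm : IsCountablyAdditive m) {s : Set Ω}
    (hs : MeasurableSet s) : hm.toVectorMeasure s = m s :=
  if_pos hs

theorem IsCountablyAdditive.apply_biUnion_finset (hm : IsCountablyAdditive m) {ι : Type*}
    {s : Finset ι} {f : ι → Set Ω} (hd : (s : Set ι).PairwiseDisjoint f)
    (hf : ∀ i ∈ s, MeasurableSet (f i)) : m (⋃ i ∈ s, f i) = ∑ i ∈ s, m (f i) := by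
  rw [← hm.toVectorMeasure_apply (Finset.measurableSet_biUnion s hf),
    VectorMeasure.of_biUnion_finset hd hf]
  exact sum_congr rfl fun i hi => hm.toVectorMeasure_apply (hf i hi)

end CountablyAdditive

section PartitionAtom

variable {Ω ι : Type*}

def partitionAtom (E : ι → Set Ω) (S : Finset ι) : Set Ω := {ω | ∀ i, ω ∈ E i ↔ i ∈ S}

theorem measurableSet_partitionAtom [MeasurableSpace Ω] [Countable ι] {E : ι → Set Ω}
    (hE : ∀ i, MeasurableSet (E i)) (S : Finset ι) : MeasurableSet (partitionAtom E S) :=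
  measurableSet_setOfPred.2 <| Measurable.forall fun i =>
    (measurableSet_setOfPred.1 (hE i)).iff measurable_const

theorem pairwise_disjoint_partitionAtom (E : ι → Set Ω) :
    Pairwise (Function.onFun Disjoint (partitionAtom E)) := by
  intro S T hST
  refine Set.disjoint_left.2 fun ω hS hT => hST ?_
  ext i
  rw [← hS i, hT i]

theorem inter_eq_biUnion_partitionAtom [Fintype ι] [DecidableEq ι] (E : ι → Set Ω) (i j : ι) :
    E i ∩ E j = ⋃ S ∈ univ.filter (fun S => i ∈ S ∧ j ∈ S), partitionAtom E S := by
  classical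
  ext ω
  simp only [Set.mem_inter_iff, Set.mem_iUnion, mem_filter, mem_univ, true_and, exists_prop]
  constructor
  · rintro ⟨hi, hj⟩
    exact ⟨univ.filter (ω ∈ E ·), by simp [hi, hj], fun k => by simp⟩
  · rintro ⟨S, ⟨hiS, hjS⟩, hω⟩
    exact ⟨(hω i).2 hiS, (hω j).2 hjS⟩

end PartitionAtom

theorem Finset.sum_sum_sum_filter_mem_and_mem {ι M : Type*} [Fintype ι] [DecidableEq ι]
    [AddCommMonoid M] (f : ι → ι → Finset ι → M) :
    ∑ i, ∑ j, ∑ S ∈ univ.filter (fun S => i ∈ S ∧ j ∈ S), f i j S =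
      ∑ S, ∑ i ∈ S, ∑ j ∈ S, f i j S := by
  simp_rw [sum_filter, ite_and,
    sum_comm (s := (univ : Finset ι)) (t := (univ : Finset (Finset ι)))]
  simp

section Gram

variable {𝕜 H Ω ι : Type*} [RCLike 𝕜] [NormedAddCommGroup H] [InnerProductSpace 𝕜 H]

theorem inner_apply_conj_smul_conj_smul (T : H →L[𝕜] H) (a b : 𝕜) (x y : H) :
    ⟪T ((starRingEnd 𝕜) a • x), (starRingEnd 𝕜) b • y⟫_𝕜 = a * (starRingEnd 𝕜) b * ⟪T x, y⟫_𝕜 := by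
  rw [map_smul, inner_smul_left, inner_smul_right, RCLike.conj_conj, mul_assoc]

theorem inner_apply_sum_sum (T : H →L[𝕜] H) (s : Finset ι) (y : ι → H) :
    ⟪T (∑ i ∈ s, y i), ∑ j ∈ s, y j⟫_𝕜 = ∑ i ∈ s, ∑ j ∈ s, ⟪T (y i), y j⟫_𝕜 := by
  simp_rw [map_sum, sum_inner, inner_sum]

theorem sum_inner_apply_inter_eq_sum_partitionAtom [MeasurableSpace Ω] [Fintype ι]
    [DecidableEq ι] {ϖ : Set Ω → H →L[𝕜] H} (hϖ : ∀ x, IsCountablyAdditive (ϖ · x))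
    {E : ι → Set Ω} (hE : ∀ i, MeasurableSet (E i)) (y : ι → H) :
    ∑ i, ∑ j, ⟪ϖ (E i ∩ E j) (y i), y j⟫_𝕜 =
      ∑ S, ⟪ϖ (partitionAtom E S) (∑ i ∈ S, y i), ∑ j ∈ S, y j⟫_𝕜 := by
  have hsplit : ∀ i j, ⟪ϖ (E i ∩ E j) (y i), y j⟫_𝕜 =
      ∑ S ∈ univ.filter (fun S => i ∈ S ∧ j ∈ S), ⟪ϖ (partitionAtom E S) (y i), y j⟫_𝕜 := by
    intro i j
    rw [inter_eq_biUnion_partitionAtom, (hϖ (y i)).apply_biUnion_finset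
      ((pairwise_disjoint_partitionAtom E).set_pairwise _)
      fun S _ => measurableSet_partitionAtom hE S, sum_inner]
  simp_rw [hsplit, Finset.sum_sum_sum_filter_mem_and_mem, inner_apply_sum_sum]

end Gram

theorem povm_gram_sum_nonneg_general
    {Ω : Type*} [MeasurableSpace Ω]
    {H : Type*} [NormedAddCommGroup H] [InnerProductSpace ℂ H]
    -- a positive operator-valued measure ϖ on (Ω, Σ) acting on H
    (ϖ : Set Ω → H →L[ℂ] H)
    (hϖ_add : ∀ B : ℕ → Set Ω, (∀ i, MeasurableSet (B i)) → Pairwise (Function.onFun Disjoint B) →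
      ∀ x : H, HasSum (fun i => ϖ (B i) x) (ϖ (⋃ i, B i) x))
    (hϖ_pos : ∀ E : Set Ω, MeasurableSet E → ∀ x : H,
      0 ≤ (inner ℂ (ϖ E x) x : ℂ).re ∧ (inner ℂ (ϖ E x) x : ℂ).im = 0) :
    ∀ (n : ℕ) (α : Fin n → ℂ) (x : Fin n → H) (E : Fin n → Set Ω),
      (∀ i, MeasurableSet (E i)) →
      ((∑ i, ∑ j, α i * (starRingEnd ℂ) (α j) *
          (inner ℂ (ϖ (E i ∩ E j) (x i)) (x j) : ℂ)).im = 0 ∧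
       0 ≤ (∑ i, ∑ j, α i * (starRingEnd ℂ) (α j) *
          (inner ℂ (ϖ (E i ∩ E j) (x i)) (x j) : ℂ)).re) ∧
      ((∀ i j, i ≠ j → Disjoint (E i) (E j)) →
        ∑ i, ∑ j, α i * (starRingEnd ℂ) (α j) *
            (inner ℂ (ϖ (E i ∩ E j) (x i)) (x j) : ℂ)
          = ∑ i, (((‖α i‖ : ℝ) : ℂ) ^ 2) * (inner ℂ (ϖ (E i) (x i)) (x i) : ℂ)) := by
  intro n α x E hE
  have hadd : ∀ y, IsCountablyAdditive (ϖ · y) := fun y B hB hd => hϖ_add B hB hd y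
  have hgram : ∑ i, ∑ j, α i * (starRingEnd ℂ) (α j) * ⟪ϖ (E i ∩ E j) (x i), x j⟫_ℂ =
      ∑ S, ⟪ϖ (partitionAtom E S) (∑ i ∈ S, (starRingEnd ℂ) (α i) • x i),
        ∑ j ∈ S, (starRingEnd ℂ) (α j) • x j⟫_ℂ := by
    simp_rw [← inner_apply_conj_smul_conj_smul]
    exact sum_inner_apply_inter_eq_sum_partitionAtom hadd hE _
  have hnonneg : 0 ≤ ∑ i, ∑ j, α i * (starRingEnd ℂ) (α j) * ⟪ϖ (E i ∩ E j) (x i), x j⟫_ℂ :=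
    hgram ▸ sum_nonneg fun S _ =>
      Complex.nonneg_iff.2 ((hϖ_pos _ (measurableSet_partitionAtom hE S) _).imp_right Eq.symm)
  obtain ⟨hre, him⟩ := Complex.nonneg_iff.1 hnonneg
  refine ⟨⟨him.symm, hre⟩, fun hdisj => sum_congr rfl fun i _ => ?_⟩
  have hoff : ∀ j ≠ i, α i * (starRingEnd ℂ) (α j) * ⟪ϖ (E i ∩ E j) (x i), x j⟫_ℂ = 0 :=
    fun j hji => by
      rw [(hdisj i j hji.symm).inter_eq, (hadd (x i)).apply_empty, inner_zero_left, mul_zero]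
  rw [sum_eq_single i (fun j _ => hoff j) (by simp), Set.inter_self, Complex.mul_conj,
    Complex.normSq_eq_norm_sq, Complex.ofReal_pow]

/-- For a positive operator-valued measure `ϖ` on a complex Hilbert
space `H`, the Gram-type sum `Σ_{i,j} α_i conj(α_j) ⟨ϖ(E_i ∩ E_j) x_i, x_j⟩` is real and
nonnegative; if the sets `E_i` are pairwise disjoint it equals
`Σ_i |α_i|² ⟨ϖ(E_i) x_i, x_i⟩`. -/
theorem povm_gram_sum_nonneg
    {Ω : Type*} [MeasurableSpace Ω]
    {H : Type*} [NormedAddCommGroup H] [InnerProductSpace ℂ H] [CompleteSpace H]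
    -- a positive operator-valued measure ϖ on (Ω, Σ) acting on H
    (ϖ : Set Ω → H →L[ℂ] H)
    (hϖ_add : ∀ B : ℕ → Set Ω, (∀ i, MeasurableSet (B i)) → Pairwise (Function.onFun Disjoint B) →
      ∀ x : H, HasSum (fun i => ϖ (B i) x) (ϖ (⋃ i, B i) x))
    (hϖ_pos : ∀ E : Set Ω, MeasurableSet E → ∀ x : H,
      0 ≤ (inner ℂ (ϖ E x) x : ℂ).re ∧ (inner ℂ (ϖ E x) x : ℂ).im = 0) :
    ∀ (n : ℕ) (α : Fin n → ℂ) (x : Fin n → H) (E : Fin n → Set Ω),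
      (∀ i, MeasurableSet (E i)) →
      ((∑ i, ∑ j, α i * (starRingEnd ℂ) (α j) *
          (inner ℂ (ϖ (E i ∩ E j) (x i)) (x j) : ℂ)).im = 0 ∧
       0 ≤ (∑ i, ∑ j, α i * (starRingEnd ℂ) (α j) *
          (inner ℂ (ϖ (E i ∩ E j) (x i)) (x j) : ℂ)).re) ∧
      ((∀ i j, i ≠ j → Disjoint (E i) (E j)) →
        ∑ i, ∑ j, α i * (starRingEnd ℂ) (α j) *
            (inner ℂ (ϖ (E i ∩ E j) (x i)) (x j) : ℂ)
          = ∑ i, (((‖α i‖ : ℝ) : ℂ) ^ 2) * (inner ℂ (ϖ (E i) (x i)) (x i) : ℂ)) :=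
  povm_gram_sum_nonneg_general ϖ hϖ_add hϖ_pos
end

section
/- Let X be a complex Banach space, G a countable discrete group, and I an isometric representation of G on X (I_g I_h = I_{gh}, I_e = Id, each I_g an isometry). Let x ∈ X and f ∈ X* be such that {I_g x, I*_{g^{-1}} f}_{g∈G} is a framing for X, and for each subset E ⊆ G define φ(E) ∈ B(X) by φ(E)y = Σ_{h∈E} ⟨y, I*_{h^{-1}} f⟩ I_h x (the series converging unconditionally since it is a subseries of the framing expansion of y). Then I_g φ(E) I_{g^{-1}} = φ(gE) for all g ∈ G and all E ⊆ G, where gE = {gh : h ∈ E}; moreover φ is countably additive in the strong operator topology, so (I, φ) is an operator-valued isometric system of imprimitivity. -/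
/-!
Applying `I_g` termwise to the series for `φ(E)(I_{g⁻¹} v)` turns the term indexed by `h` into
the term of the series for `φ(gE) v` indexed by `gh`, because `I_g I_h = I_{gh}` and
`I_h⁻¹ I_g⁻¹ = I_{(gh)⁻¹}`; so the two sums agree after reindexing along `h ↦ gh`.
Countable additivity is the regrouping of the series over `⋃ i, B i` into a sum over the
disjoint pieces `B i`, which is legitimate for unconditionally convergent series.
-/

open Function

section SubtypeSums

variable {α M : Type*} [AddCommMonoid M] [TopologicalSpace M]

theorem hasSum_image_iff_of_injective {β : Type*} {e : α → β} (he : Injective e) (E : Set α)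
    (u : β → M) (s : M) :
    HasSum (fun b : e '' E => u b) s ↔ HasSum (fun a : E => u (e a)) s :=
  (Equiv.Set.imageOfInjOn e E he.injOn).hasSum_iff.symm

theorem hasSum_iUnion_of_pairwise_disjoint [ContinuousAdd M] [RegularSpace M] {ι : Type*}
    {u : α → M} {B : ι → Set α} (hB : Pairwise (Disjoint on B)) {s : ι → M} {S : M}
    (hs : ∀ i, HasSum (fun a : B i => u a) (s i))
    (hS : HasSum (fun a : ⋃ i, B i => u a) S) : HasSum s S :=
  ((Equiv.ofBijective _ (Set.sigmaToiUnion_bijective B hB)).hasSum_iff.2 hS).sigma hs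

end SubtypeSums

theorem framing_induced_system_of_imprimitivity_general
    {X : Type*} [NormedAddCommGroup X] [NormedSpace ℂ X]
    {G : Type*} [Group G]
    -- an isometric representation I of G on X
    (I : G → X →L[ℂ] X)
    (hI_mul : ∀ g h, (I g).comp (I h) = I (g * h))
    -- a framing {I_g x, I*_{g⁻¹} f}_{g∈G} for X
    (x : X) (f : X →L[ℂ] ℂ)
    -- the induced operator-valued measure φ
    (φ : Set G → X →L[ℂ] X)
    (hφ : ∀ (E : Set G) (v : X),
      HasSum (fun h : E => f (I (h : G)⁻¹ v) • I (h : G) x) (φ E v)) :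
    -- the covariance relation I_g φ(E) I_{g⁻¹} = φ(gE)
    (∀ (g : G) (E : Set G),
      (I g).comp ((φ E).comp (I g⁻¹)) = φ ((fun h => g * h) '' E)) ∧
    -- φ is countably additive in the strong operator topology
    (∀ B : ℕ → Set G, Pairwise (Function.onFun Disjoint B) →
      ∀ v : X, HasSum (fun i => φ (B i) v) (φ (⋃ i, B i) v)) := by
  refine ⟨fun g E => ?_,
    fun B hB v => hasSum_iUnion_of_pairwise_disjoint (u := fun h => f (I h⁻¹ v) • I h x) hB
      (fun i => hφ (B i) v) (hφ _ v)⟩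
  ext v
  have hterm : ∀ h : G,
      I g (f (I h⁻¹ (I g⁻¹ v)) • I h x) = f (I (g * h)⁻¹ v) • I (g * h) x := by
    intro h
    rw [map_smul, mul_inv_rev, ← hI_mul, ← hI_mul, ContinuousLinearMap.comp_apply,
      ContinuousLinearMap.comp_apply]
  have hconj := (I g).hasSum (hφ E (I g⁻¹ v))
  simp only [hterm] at hconj
  exact hconj.unique <| (hasSum_image_iff_of_injective (mul_right_injective g) E
    (fun h => f (I h⁻¹ v) • I h x) _).1 (hφ _ v)

/-- A framing `{I_g x, I*_{g⁻¹} f}_{g∈G}` induced by an isometric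
representation `I` of a countable discrete group `G` on a Banach space `X` gives rise to
an operator-valued measure `φ(E) = Σ_{h∈E} I_h x ⊗ I*_{h⁻¹} f` satisfying
`I_g φ(E) I_{g⁻¹} = φ(gE)`; together with its countable additivity, `(I, φ)` is an
operator-valued isometric system of imprimitivity. -/
theorem framing_induced_system_of_imprimitivity
    {X : Type*} [NormedAddCommGroup X] [NormedSpace ℂ X] [CompleteSpace X]
    {G : Type*} [Group G] [Countable G]
    -- an isometric representation I of G on X
    (I : G → X →L[ℂ] X)
    (hI_iso : ∀ g (v : X), ‖I g v‖ = ‖v‖)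
    (hI_one : I 1 = ContinuousLinearMap.id ℂ X)
    (hI_mul : ∀ g h, (I g).comp (I h) = I (g * h))
    -- a framing {I_g x, I*_{g⁻¹} f}_{g∈G} for X
    (x : X) (f : X →L[ℂ] ℂ)
    (hframe : ∀ v : X, HasSum (fun g : G => f (I g⁻¹ v) • I g x) v)
    -- the induced operator-valued measure φ
    (φ : Set G → X →L[ℂ] X)
    (hφ : ∀ (E : Set G) (v : X),
      HasSum (fun h : E => f (I (h : G)⁻¹ v) • I (h : G) x) (φ E v)) :
    -- the covariance relation I_g φ(E) I_{g⁻¹} = φ(gE)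
    (∀ (g : G) (E : Set G),
      (I g).comp ((φ E).comp (I g⁻¹)) = φ ((fun h => g * h) '' E)) ∧
    -- φ is countably additive in the strong operator topology
    (∀ B : ℕ → Set G, Pairwise (Function.onFun Disjoint B) →
      ∀ v : X, HasSum (fun i => φ (B i) v) (φ (⋃ i, B i) v)) :=
  framing_induced_system_of_imprimitivity_general I hI_mul x f φ hφ
end

section
/- Let G be a group acting on a σ-field Σ of subsets of Ω as a Σ-measurable G-space, X a complex Banach space, and (W, φ) a projective isometric operator-valued system of imprimitivity of (G, Σ) on X with multiplier ω. Then for every s ∈ G, every n ∈ ℕ, and all c_1, …, c_n ∈ ℂ, x_1, …, x_n ∈ X, E_1, …, E_n ∈ Σ, one has sup_{F∈Σ} ‖Σ_{j=1}^n c_j φ(sE_j ∩ F) W_s x_j‖ = sup_{F∈Σ} ‖Σ_{j=1}^n c_j φ(E_j ∩ F) x_j‖; that is, the operator V_s defined on span{φ_{x,E}} by V_s(φ_{x,E}) = φ_{W_s x, sE} is an isometry with respect to the minimal dilation norm ‖Σ_j c_j φ_{x_j,E_j}‖_α = sup_{F∈Σ} ‖Σ_j c_j φ(E_j ∩ F)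 x_j‖. -/
/-! Covariance `W_s φ(E) = φ(sE) W_s` turns `φ(sE_j ∩ F) W_s x_j` into `W_s φ(E_j ∩ s⁻¹F) x_j`;
since `W_s` is isometric, the norm of the `F`-th sum on the left equals the norm of the
`s⁻¹F`-th sum on the right, and `F ↦ s⁻¹F` is a bijection of `Σ`, so the two suprema agree. -/

open Set

theorem iInter_ite_eq_zero {α : Type*} (A B : Set α) :
    (⋂ n : ℕ, if n = 0 then A else B) = A ∩ B := by
  ext y
  simp only [mem_iInter, mem_inter_iff]
  refine ⟨fun hy => ⟨by simpa using hy 0, by simpa using hy 1⟩, fun hy n => ?_⟩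
  split_ifs
  exacts [hy.1, hy.2]

theorem map_inter_of_map_iInter {α β : Type*} {f : Set α → Set β} {p : Set α → Prop}
    (hf : ∀ E : ℕ → Set α, (∀ n, p (E n)) → f (⋂ n, E n) = ⋂ n, f (E n))
    {A B : Set α} (hA : p A) (hB : p B) : f (A ∩ B) = f A ∩ f B := by
  simpa only [iInter_ite_eq_zero, apply_ite f] using
    hf (fun n => if n = 0 then A else B) fun n => by split_ifs <;> assumption

section SystemOfImprimitivity

variable {Ω G X : Type*} [MeasurableSpace Ω] [Group G]
  [NormedAddCommGroup X] [NormedSpace ℂ X]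

theorem act_inv_act {act : G → Set Ω → Set Ω}
    (hact_mul : ∀ s t (E : Set Ω), MeasurableSet E → act s (act t E) = act (s * t) E)
    (hact_one : ∀ E : Set Ω, MeasurableSet E → act 1 E = E)
    (s : G) {E : Set Ω} (hE : MeasurableSet E) : act s⁻¹ (act s E) = E := by
  rw [hact_mul _ _ _ hE, inv_mul_cancel, hact_one _ hE]

theorem act_act_inv {act : G → Set Ω → Set Ω}
    (hact_mul : ∀ s t (E : Set Ω), MeasurableSet E → act s (act t E) = act (s * t) E)
    (hact_one : ∀ E : Set Ω, MeasurableSet E → act 1 E = E)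
    (s : G) {E : Set Ω} (hE : MeasurableSet E) : act s (act s⁻¹ E) = E := by
  rw [hact_mul _ _ _ hE, mul_inv_cancel, hact_one _ hE]

theorem covariance_apply_inter {act : G → Set Ω → Set Ω}
    (hact_meas : ∀ s (E : Set Ω), MeasurableSet E → MeasurableSet (act s E))
    (hact_mul : ∀ s t (E : Set Ω), MeasurableSet E → act s (act t E) = act (s * t) E)
    (hact_one : ∀ E : Set Ω, MeasurableSet E → act 1 E = E)
    (hact_iInter : ∀ s (E : ℕ → Set Ω), (∀ n, MeasurableSet (E n)) →
      act s (⋂ n, E n) = ⋂ n, act s (E n))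
    {W : G → X →L[ℂ] X} {φ : Set Ω → X →L[ℂ] X}
    (hcov : ∀ s (E : Set Ω), MeasurableSet E → (W s).comp (φ E) = (φ (act s E)).comp (W s))
    (s : G) {E F : Set Ω} (hE : MeasurableSet E) (hF : MeasurableSet F) (x : X) :
    φ (act s E ∩ F) (W s x) = W s (φ (E ∩ act s⁻¹ F) x) := by
  have hF' : MeasurableSet (act s⁻¹ F) := hact_meas _ _ hF
  have hset : act s (E ∩ act s⁻¹ F) = act s E ∩ F := by
    rw [map_inter_of_map_iInter (hact_iInter s) hE hF', act_act_inv hact_mul hact_one s hF]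
  rw [← hset, ← ContinuousLinearMap.comp_apply, ← hcov _ _ (hE.inter hF'),
    ContinuousLinearMap.comp_apply]

end SystemOfImprimitivity

theorem minimal_dilation_norm_isometry_general
    {Ω : Type*} [MeasurableSpace Ω]
    {G : Type*} [Group G]
    -- a Σ-measurable G-space
    (act : G → Set Ω → Set Ω)
    (hact_meas : ∀ s (E : Set Ω), MeasurableSet E → MeasurableSet (act s E))
    (hact_mul : ∀ s t (E : Set Ω), MeasurableSet E → act s (act t E) = act (s * t) E)
    (hact_one : ∀ E : Set Ω, MeasurableSet E → act 1 E = E)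
    (hact_iInter : ∀ s (E : ℕ → Set Ω), (∀ n, MeasurableSet (E n)) →
      act s (⋂ n, E n) = ⋂ n, act s (E n))
    {X : Type*} [NormedAddCommGroup X] [NormedSpace ℂ X]
    -- a projective isometric representation W of G on X with multiplier ω
    (W : G → X →L[ℂ] X)
    (hW_iso : ∀ s (x : X), ‖W s x‖ = ‖x‖)
    -- a B(X)-valued measure φ on (Ω, Σ)
    (φ : Set Ω → X →L[ℂ] X)
    -- the covariance relation making (W, φ) a system of imprimitivity
    (hcov : ∀ s (E : Set Ω), MeasurableSet E → (W s).comp (φ E) = (φ (act s E)).comp (W s)) :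
    ∀ (s : G) (n : ℕ) (c : Fin n → ℂ) (x : Fin n → X) (E : Fin n → Set Ω),
      (∀ j, MeasurableSet (E j)) →
      (⨆ F : {F : Set Ω // MeasurableSet F},
          ‖∑ j, c j • φ (act s (E j) ∩ F.1) (W s (x j))‖)
        = ⨆ F : {F : Set Ω // MeasurableSet F}, ‖∑ j, c j • φ (E j ∩ F.1) (x j)‖ := by
  intro s n c x E hE
  let actInv : {F : Set Ω // MeasurableSet F} → {F : Set Ω // MeasurableSet F} :=
    fun F => ⟨act s⁻¹ F, hact_meas _ _ F.2⟩
  have hsurj : Function.Surjective actInv := fun F =>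
    ⟨⟨act s F, hact_meas _ _ F.2⟩, Subtype.ext (act_inv_act hact_mul hact_one s F.2)⟩
  rw [← hsurj.iSup_comp fun F => ‖∑ j, c j • φ (E j ∩ F.1) (x j)‖]
  refine iSup_congr fun F => (congrArg norm ?_).trans (hW_iso s _)
  simp only [covariance_apply_inter hact_meas hact_mul hact_one hact_iInter hcov s (hE _) F.2,
    map_sum, map_smul, actInv]

/-- For a projective isometric operator-valued system of imprimitivity
`(W, φ)` of a group `G` acting on `(Ω, Σ)`, the operator `V_s : φ_{x,E} ↦ φ_{W_s x, sE}`
is isometric with respect to the minimal dilation norm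
`‖Σ_j c_j φ_{x_j,E_j}‖_α = sup_{F∈Σ} ‖Σ_j c_j φ(E_j ∩ F) x_j‖`. -/
theorem minimal_dilation_norm_isometry
    {Ω : Type*} [MeasurableSpace Ω]
    {G : Type*} [Group G]
    -- a Σ-measurable G-space
    (act : G → Set Ω → Set Ω)
    (hact_meas : ∀ s (E : Set Ω), MeasurableSet E → MeasurableSet (act s E))
    (hact_mul : ∀ s t (E : Set Ω), MeasurableSet E → act s (act t E) = act (s * t) E)
    (hact_one : ∀ E : Set Ω, MeasurableSet E → act 1 E = E)
    (hact_empty : ∀ s, act s (∅ : Set Ω) = ∅)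
    (hact_univ : ∀ s, act s (Set.univ : Set Ω) = Set.univ)
    (hact_iUnion : ∀ s (E : ℕ → Set Ω), (∀ n, MeasurableSet (E n)) →
      act s (⋃ n, E n) = ⋃ n, act s (E n))
    (hact_iInter : ∀ s (E : ℕ → Set Ω), (∀ n, MeasurableSet (E n)) →
      act s (⋂ n, E n) = ⋂ n, act s (E n))
    {X : Type*} [NormedAddCommGroup X] [NormedSpace ℂ X] [CompleteSpace X]
    -- a multiplier ω on G
    (ω : G → G → ℂ)
    (hω_norm : ∀ s t, ‖ω s t‖ = 1)
    (hω_one : ∀ s, ω 1 s = 1 ∧ ω s 1 = 1)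
    (hω_cocycle : ∀ s t u, ω s t * ω (s * t) u = ω s (t * u) * ω t u)
    -- a projective isometric representation W of G on X with multiplier ω
    (W : G → X →L[ℂ] X)
    (hW_iso : ∀ s (x : X), ‖W s x‖ = ‖x‖)
    (hW_one : W 1 = ContinuousLinearMap.id ℂ X)
    (hW_mul : ∀ s t, (W s).comp (W t) = ω s t • W (s * t))
    -- a B(X)-valued measure φ on (Ω, Σ)
    (φ : Set Ω → X →L[ℂ] X)
    (hφ_add : ∀ B : ℕ → Set Ω, (∀ i, MeasurableSet (B i)) → Pairwise (Function.onFun Disjoint B) →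
      ∀ x : X, HasSum (fun i => φ (B i) x) (φ (⋃ i, B i) x))
    -- the covariance relation making (W, φ) a system of imprimitivity
    (hcov : ∀ s (E : Set Ω), MeasurableSet E → (W s).comp (φ E) = (φ (act s E)).comp (W s)) :
    ∀ (s : G) (n : ℕ) (c : Fin n → ℂ) (x : Fin n → X) (E : Fin n → Set Ω),
      (∀ j, MeasurableSet (E j)) →
      (⨆ F : {F : Set Ω // MeasurableSet F},
          ‖∑ j, c j • φ (act s (E j) ∩ F.1) (W s (x j))‖)
        = ⨆ F : {F : Set Ω // MeasurableSet F}, ‖∑ j, c j • φ (E j ∩ F.1) (x j)‖ :=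
  minimal_dilation_norm_isometry_general act hact_meas hact_mul hact_one hact_iInter W hW_iso φ hcov
end
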